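/- Let v, b₁, …, bₙ ∈ ℤ^{n+1} be linearly independent and let L be the lattice they generate. Then: (i) for every α ∈ ℤⁿ, the vectors v, b₁+α₁v, …, bₙ+αₙv also generate L; and (ii) the supremum of dist(v, ⟨B''⟩) over all families B'' = {b''₁,…,b''ₙ} such that {v, b''₁, …, b''ₙ} generates L equals the supremum of dist(v, ⟨{b₁+α₁v, …, bₙ+αₙv}⟩) over all α ∈ ℤⁿ. -/

import Mathlib

/-- The real vector corresponding to an integer vector. -/
noncomputable def toR {m : ℕ} (x : Fin m → ℤ) : EuclideanSpace ℝ (Fin m) :=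
  WithLp.toLp 2 (fun i => (x i : ℝ))

/-- The lattice generated by `v, b₁, …, bₙ` (integer vectors), i.e. all integer
combinations `z₀·v + Σᵢ zᵢ·bᵢ`. -/
def latt {n m : ℕ} (v : Fin m → ℤ) (b : Fin n → Fin m → ℤ) : Set (Fin m → ℤ) :=
  {x | ∃ z₀ : ℤ, ∃ z : Fin n → ℤ, x = z₀ • v + ∑ i, z i • b i}

/-- The orthogonal projection of `v` onto the span of `S`. -/
noncomputable def projSpan {m : ℕ} (S : Set (EuclideanSpace ℝ (Fin m)))
    (v : EuclideanSpace ℝ (Fin m)) : EuclideanSpace ℝ (Fin m) :=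
  (Submodule.orthogonalProjectionOnto (Submodule.span ℝ S) v : EuclideanSpace ℝ (Fin m))

/-- `dist(v, ⟨S⟩) = ‖v − proj_{⟨S⟩}(v)‖`. -/
noncomputable def distSpan {m : ℕ} (v : EuclideanSpace ℝ (Fin m))
    (S : Set (EuclideanSpace ℝ (Fin m))) : ℝ :=
  ‖v - projSpan S v‖

lemma euc_sum_apply {m k : ℕ} (g : Fin k → EuclideanSpace ℝ (Fin m)) (x : Fin m) :
    (∑ i, g i) x = ∑ i, g i x := by
  rw [WithLp.ofLp_sum, Finset.sum_apply]

lemma toR_comb {m k : ℕ} (a : ℤ) (v : Fin m → ℤ) (f : Fin k → ℤ) (b : Fin k → Fin m → ℤ) :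
    toR (a • v + ∑ i, f i • b i) = (a:ℝ) • toR v + ∑ i, (f i:ℝ) • toR (b i) := by
  ext x
  simp [toR, Finset.sum_apply, PiLp.add_apply, PiLp.smul_apply, euc_sum_apply]

lemma toR_sum {m k : ℕ} (f : Fin k → ℤ) (b : Fin k → Fin m → ℤ) :
    toR (∑ i, f i • b i) = ∑ i, (f i:ℝ) • toR (b i) := by
  have h := toR_comb 0 (fun _ => (0:ℤ)) f b
  simpa using h

lemma self_mem_latt {n m : ℕ} (v : Fin m → ℤ) (b : Fin n → Fin m → ℤ) (i : Fin n) :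
    b i ∈ latt v b := ⟨0, fun j => if j = i then 1 else 0, by simp [ite_smul]⟩

lemma key_shift (n : ℕ) (v : Fin (n+1) → ℤ) (b c : Fin n → Fin (n+1) → ℤ)
    (hli : LinearIndependent ℝ (Fin.cons (toR v) (fun i => toR (b i)) : Fin (n+1) → _))
    (h : latt v c = latt v b) :
    ∃ α : Fin n → ℤ,
      Submodule.span ℝ (Set.range fun i => toR (c i)) =
      Submodule.span ℝ (Set.range fun i => toR (b i + α i • v)) := by
  have h1 : ∀ i, c i ∈ latt v b := fun i => h ▸ self_mem_latt v c i
  have h2 : ∀ i, b i ∈ latt v c := fun i => h.symm ▸ self_mem_latt v b i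
  choose k U hcU using h1
  choose l V hbV using h2
  -- substituted integer identity
  have hsub : ∀ i, b i = (l i + ∑ j, V i j * k j) • v + ∑ p, (∑ j, V i j * U j p) • b p := by
    intro i
    funext t
    have hb := congrFun (hbV i) t
    have hc := fun j => congrFun (hcU j) t
    simp only [Pi.add_apply, Pi.smul_apply, Finset.sum_apply, smul_eq_mul] at hb hc ⊢
    rw [hb]
    simp only [hc]
    simp only [mul_add, Finset.sum_add_distrib, add_mul, Finset.sum_mul, Finset.mul_sum, mul_assoc]
    rw [Finset.sum_comm]
    ring
  -- extract coefficients via linear independence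
  have hVU : ∀ i p, (∑ j, V i j * U j p) = if i = p then 1 else 0 := by
    intro i p
    have hre := congrArg toR (hsub i)
    rw [toR_comb] at hre
    set g : Fin (n+1) → ℝ := Fin.cons ((l i + ∑ j, V i j * k j : ℤ) : ℝ)
      (fun q => ((∑ j, V i j * U j q : ℤ) : ℝ) - if q = i then 1 else 0) with hg
    have hgsum : ∑ t, g t • (Fin.cons (toR v) (fun i => toR (b i)) : Fin (n+1) → _) t = 0 := by
      rw [Fin.sum_univ_succ]
      simp only [hg, Fin.cons_zero, Fin.cons_succ, sub_smul, ite_smul, one_smul, zero_smul,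
        Finset.sum_sub_distrib, Finset.sum_ite_eq']
      simp only [Finset.mem_univ, if_true]
      rw [hre]
      abel
    have hz := Fintype.linearIndependent_iff.mp hli g hgsum (Fin.succ p)
    simp only [hg, Fin.cons_succ, sub_eq_zero] at hz
    by_cases hip : p = i
    · subst hip
      simp only [if_true] at hz
      have : ((∑ j, V p j * U j p : ℤ) : ℝ) = ((1:ℤ):ℝ) := by simpa using hz
      simpa using Int.cast_injective this
    · simp only [hip, if_false] at hz
      have : ((∑ j, V i j * U j p : ℤ) : ℝ) = ((0:ℤ):ℝ) := by simpa using hz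
      have h0 := Int.cast_injective this
      rw [h0, if_neg (fun h' : i = p => hip h'.symm)]
  -- matrix inverse
  have hUV : ∀ i p, (∑ j, U i j * V j p) = if i = p then 1 else 0 := by
    have hm : (Matrix.of V) * (Matrix.of U) = 1 := by
      ext i p
      simp [Matrix.mul_apply, Matrix.one_apply, hVU]
    have hm' := mul_eq_one_comm.mp hm
    intro i p
    have := congrFun (congrFun hm' i) p
    simpa [Matrix.mul_apply, Matrix.one_apply] using this
  set α : Fin n → ℤ := fun j => ∑ p, V j p * k p with hα
  have hUα : ∀ i, ∑ j, U i j * α j = k i := by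
    intro i
    simp only [hα, Finset.mul_sum]
    rw [Finset.sum_comm]
    simp only [← mul_assoc, ← Finset.sum_mul, hUV]
    simp [ite_mul]
  -- c in terms of shifted basis
  have hc' : ∀ i, c i = ∑ j, U i j • (fun t => b j t + α j * v t) := by
    intro i
    funext t
    have hc := congrFun (hcU i) t
    simp only [Pi.add_apply, Pi.smul_apply, Finset.sum_apply, smul_eq_mul] at hc ⊢
    rw [hc]
    simp only [mul_add, Finset.sum_add_distrib, ← mul_assoc, ← Finset.sum_mul]
    rw [show (∑ j, U i j * α j) = k i from hUα i]
    ring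
  -- shifted basis in terms of c
  have hb' : ∀ j, (b j + α j • v) = ∑ i, V j i • c i := by
    intro j
    funext t
    have hc := fun i => congrFun (hcU i) t
    simp only [Pi.add_apply, Pi.smul_apply, Finset.sum_apply, smul_eq_mul] at hc ⊢
    simp only [hc]
    simp only [mul_add, Finset.sum_add_distrib, Finset.mul_sum, ← mul_assoc]
    rw [Finset.sum_comm]
    simp only [← Finset.sum_mul, hVU]
    simp [ite_mul, hα, Finset.sum_mul]
    ring
  refine ⟨α, le_antisymm ?_ ?_⟩ <;> rw [Submodule.span_le] <;> rintro x ⟨i, rfl⟩ <;>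
    simp only [SetLike.mem_coe]
  · show toR (c i) ∈ _
    have : toR (c i) = ∑ j, ((U i j : ℤ):ℝ) • toR (b j + α j • v) := by
      rw [show c i = ∑ j, U i j • (b j + α j • v) by
        rw [hc' i]; rfl]
      exact toR_sum _ _
    rw [this]
    exact Submodule.sum_mem _ fun j _ => Submodule.smul_mem _ _ (Submodule.subset_span ⟨j, rfl⟩)
  · show toR (b i + α i • v) ∈ _
    have : toR (b i + α i • v) = ∑ j, ((V i j : ℤ):ℝ) • toR (c j) := by
      rw [hb' i]; exact toR_sum _ _
    rw [this]
    exact Submodule.sum_mem _ fun j _ => Submodule.smul_mem _ _ (Submodule.subset_span ⟨j, rfl⟩)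


lemma distSpan_le_norm {m : ℕ} (v : EuclideanSpace ℝ (Fin m)) (S : Set (EuclideanSpace ℝ (Fin m))) :
    distSpan v S ≤ ‖v‖ := by
  unfold distSpan projSpan
  rw [← Submodule.starProjection_apply, Submodule.starProjection_minimal]
  have h0 : ‖v - ((0 : Submodule.span ℝ S) : EuclideanSpace ℝ (Fin m))‖ = ‖v‖ := by simp
  calc ⨅ x : Submodule.span ℝ S, ‖v - x‖ ≤ _ := ciInf_le ⟨0, by rintro r ⟨x, rfl⟩; positivity⟩ 0
    _ = ‖v‖ := h0

lemma distSpan_congr {m : ℕ} (v : EuclideanSpace ℝ (Fin m))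
    {S T : Set (EuclideanSpace ℝ (Fin m))} (h : Submodule.span ℝ S = Submodule.span ℝ T) :
    distSpan v S = distSpan v T := by
  unfold distSpan projSpan
  rw [← Submodule.starProjection_apply, ← Submodule.starProjection_apply,
    Submodule.starProjection_minimal, Submodule.starProjection_minimal, h]

lemma latt_shift_subset {n m : ℕ} (v : Fin m → ℤ) (b : Fin n → Fin m → ℤ) (α : Fin n → ℤ) :
    latt v (fun i => b i + α i • v) ⊆ latt v b := by
  rintro x ⟨z₀, z, rfl⟩
  refine ⟨z₀ + ∑ i, z i * α i, z, ?_⟩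
  funext t
  simp [Finset.sum_apply, mul_add, Finset.sum_add_distrib, add_mul, Finset.sum_mul, mul_assoc]
  ring

lemma latt_shift {n m : ℕ} (v : Fin m → ℤ) (b : Fin n → Fin m → ℤ) (α : Fin n → ℤ) :
    latt v (fun i => b i + α i • v) = latt v b := by
  apply Set.Subset.antisymm (latt_shift_subset v b α)
  have h2 := latt_shift_subset v (fun i => b i + α i • v) (-α)
  have he : (fun i => (b i + α i • v) + (-α) i • v) = b := by
    funext i t; simp
  rwa [he] at h2


/-- (i) for every `α ∈ ℤⁿ` the family `v, b₁+α₁v, …, bₙ+αₙv` generates the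
same lattice as `v, b₁, …, bₙ`; (ii) the supremum of `dist(v, ⟨B''⟩)` over all families
`B''` with `{v} ∪ B''` generating the lattice equals the supremum of
`dist(v, ⟨{bᵢ+αᵢv}ᵢ⟩)` over all `α ∈ ℤⁿ`. -/
theorem mdsp_reduce_to_shifts (n : ℕ) (v : Fin (n+1) → ℤ) (b : Fin n → Fin (n+1) → ℤ)
    (hli : LinearIndependent ℝ (Fin.cons (toR v) (fun i => toR (b i)) : Fin (n+1) → _)) :
    (∀ α : Fin n → ℤ, latt v (fun i => b i + α i • v) = latt v b) ∧
    (⨆ b'' : {c : Fin n → Fin (n+1) → ℤ // latt v c = latt v b},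
        distSpan (toR v) (Set.range fun i => toR (b''.1 i))) =
      ⨆ α : Fin n → ℤ, distSpan (toR v) (Set.range fun i => toR (b i + α i • v)) := by
  refine ⟨fun α => latt_shift v b α, ?_⟩
  haveI : Nonempty {c : Fin n → Fin (n+1) → ℤ // latt v c = latt v b} := ⟨⟨b, rfl⟩⟩
  have bddα : BddAbove (Set.range fun α : Fin n → ℤ =>
      distSpan (toR v) (Set.range fun i => toR (b i + α i • v))) :=
    ⟨‖toR v‖, by rintro r ⟨x, rfl⟩; exact distSpan_le_norm _ _⟩
  have bddc : BddAbove (Set.range fun b'' : {c : Fin n → Fin (n+1) → ℤ // latt v c = latt v b} =>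
      distSpan (toR v) (Set.range fun i => toR (b''.1 i))) :=
    ⟨‖toR v‖, by rintro r ⟨x, rfl⟩; exact distSpan_le_norm _ _⟩
  apply le_antisymm
  · apply ciSup_le
    rintro ⟨c, hc⟩
    obtain ⟨α, hspan⟩ := key_shift n v b c hli hc
    have heq : distSpan (toR v) (Set.range fun i => toR (c i)) =
        distSpan (toR v) (Set.range fun i => toR (b i + α i • v)) := distSpan_congr _ hspan
    rw [heq]
    exact le_ciSup bddα α
  · apply ciSup_le
    intro α
    exact le_ciSup_of_le bddc ⟨fun i => b i + α i • v, latt_shift v b α⟩ le_rfl
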